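/- Let σ_D, σ_M > 0 be the minimum singular values of positive definite matrices D and M, and let the off-diagonal entries of symmetric positive definite B be bounded in ℓ₁ norm by a constant C. Then the function CO(B) = ‖DBM‖_F² − 2 log det B is coercive: CO(B) → ∞ as ‖B‖₂ → ∞ over this constraint set. -/

import Mathlib

/-!
With `κ = (‖D⁻¹‖_F ‖M⁻¹‖_F)² + 1`, writing `B = D⁻¹ (D B M) M⁻¹` gives `‖B‖_F² ≤ κ ‖D B M‖_F²`.
On the other side `log det B ≤ tr B` (apply `log x ≤ x - 1` to the eigenvalues), and
`2 B_ii ≤ B_ii² / (2κ) + 2κ` entrywise, so `2 tr B ≤ ‖B‖_F² / (2κ) + 2κp`. Hence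
`CO(B) ≥ ‖B‖_F² / (2κ) - 2κp ≥ ‖B‖₂² / (2κ) - 2κp`, which tends to infinity with `‖B‖₂`.
-/

namespace Matrix

variable {m n : Type*} [Fintype m] [Fintype n]

lemma PosDef.log_det_le_trace_sub_card [DecidableEq n] {B : Matrix n n ℝ} (hB : B.PosDef) :
    Real.log B.det ≤ B.trace - Fintype.card n := by
  have hH := hB.isHermitian
  rw [hH.det_eq_prod_eigenvalues, hH.trace_eq_sum_eigenvalues]
  simp only [RCLike.ofReal_real_eq_id, id]
  rw [Real.log_prod fun i _ => (hB.eigenvalues_pos i).ne', ← Finset.card_univ,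
    Finset.card_eq_sum_ones, Nat.cast_sum, ← Finset.sum_sub_distrib]
  exact Finset.sum_le_sum fun i _ => by
    simpa using Real.log_le_sub_one_of_pos (hB.eigenvalues_pos i)

section Frobenius

attribute [local instance] Matrix.frobeniusNormedAddCommGroup

lemma frobenius_norm_sq_eq_sum_sq (A : Matrix m n ℝ) : ‖A‖ ^ 2 = ∑ i, ∑ j, A i j ^ 2 := by
  rw [frobenius_norm_def, ← Real.rpow_natCast, ← Real.rpow_mul (by positivity)]
  norm_num

lemma norm_toEuclideanCLM_le_frobenius_norm {𝕜 : Type*} [RCLike 𝕜] [DecidableEq n]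
    (A : Matrix n n 𝕜) : ‖toEuclideanCLM (𝕜 := 𝕜) A‖ ≤ ‖A‖ := by
  refine ContinuousLinearMap.opNorm_le_bound _ (norm_nonneg A) fun x => ?_
  calc ‖toEuclideanCLM (𝕜 := 𝕜) A x‖ = ‖replicateCol Unit (A *ᵥ x.ofLp)‖ := by
        rw [frobenius_norm_replicateCol, ← ofLp_toEuclideanCLM, WithLp.toLp_ofLp]
    _ = ‖A * replicateCol Unit x.ofLp‖ := by rw [replicateCol_mulVec]
    _ ≤ ‖A‖ * ‖x‖ := by
        refine (frobenius_norm_mul _ _).trans_eq ?_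
        rw [frobenius_norm_replicateCol, WithLp.toLp_ofLp]

lemma frobenius_norm_le_norm_inv_mul_norm_inv_mul [DecidableEq m] [DecidableEq n]
    {D : Matrix m m ℝ} {M : Matrix n n ℝ} (hD : IsUnit D) (hM : IsUnit M) (B : Matrix m n ℝ) :
    ‖B‖ ≤ ‖D⁻¹‖ * ‖M⁻¹‖ * ‖D * B * M‖ := by
  have hB : B = D⁻¹ * (D * B * M) * M⁻¹ := by
    rw [← Matrix.mul_assoc, ← Matrix.mul_assoc, nonsing_inv_mul _ ((isUnit_iff_isUnit_det D).mp hD),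
      Matrix.one_mul, Matrix.mul_assoc, mul_nonsing_inv _ ((isUnit_iff_isUnit_det M).mp hM),
      Matrix.mul_one]
  calc ‖B‖ = ‖D⁻¹ * (D * B * M) * M⁻¹‖ := by rw [← hB]
    _ ≤ ‖D⁻¹‖ * ‖D * B * M‖ * ‖M⁻¹‖ :=
        (frobenius_norm_mul _ _).trans (by gcongr; exact frobenius_norm_mul _ _)
    _ = ‖D⁻¹‖ * ‖M⁻¹‖ * ‖D * B * M‖ := by ring

lemma two_mul_trace_le [DecidableEq n] (A : Matrix n n ℝ) {ε : ℝ} (hε : 0 < ε) :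
    2 * A.trace ≤ ε * ‖A‖ ^ 2 + Fintype.card n / ε := by
  have hdiag : ∀ i, 2 * A i i ≤ ε * A i i ^ 2 + 1 / ε := fun i => by
    have : ε * A i i ^ 2 + 1 / ε - 2 * A i i = (ε * A i i - 1) ^ 2 / ε := by
      field_simp; ring
    linarith [show 0 ≤ (ε * A i i - 1) ^ 2 / ε by positivity]
  have hsq : ∑ i, A i i ^ 2 ≤ ‖A‖ ^ 2 := by
    rw [frobenius_norm_sq_eq_sum_sq]
    exact Finset.sum_le_sum fun i _ =>
      Finset.single_le_sum (f := fun j => A i j ^ 2) (fun j _ => sq_nonneg _) (Finset.mem_univ i)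
  calc 2 * A.trace = ∑ i, 2 * A i i := by rw [trace, Finset.mul_sum]; rfl
    _ ≤ ∑ i, (ε * A i i ^ 2 + 1 / ε) := Finset.sum_le_sum fun i _ => hdiag i
    _ = ε * ∑ i, A i i ^ 2 + Fintype.card n / ε := by
        rw [Finset.sum_add_distrib, ← Finset.mul_sum]; simp [div_eq_mul_inv]
    _ ≤ ε * ‖A‖ ^ 2 + Fintype.card n / ε := by gcongr

lemma exists_mul_opNorm_sq_sub_le_frobenius_sq_sub_log_det [DecidableEq n] {D M : Matrix n n ℝ}
    (hD : IsUnit D) (hM : IsUnit M) :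
    ∃ a > 0, ∃ b : ℝ, ∀ B : Matrix n n ℝ, B.PosDef →
      a * ‖toEuclideanCLM (𝕜 := ℝ) B‖ ^ 2 - b ≤ ‖D * B * M‖ ^ 2 - 2 * Real.log B.det := by
  set κ := (‖D⁻¹‖ * ‖M⁻¹‖) ^ 2 + 1
  have hκ : 0 < κ := by positivity
  refine ⟨1 / (2 * κ), by positivity, 2 * κ * Fintype.card n, fun B hB => ?_⟩
  have hBF : ‖B‖ ^ 2 ≤ κ * ‖D * B * M‖ ^ 2 := calc
    ‖B‖ ^ 2 ≤ (‖D⁻¹‖ * ‖M⁻¹‖ * ‖D * B * M‖) ^ 2 := by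
      gcongr; exact frobenius_norm_le_norm_inv_mul_norm_inv_mul hD hM B
    _ ≤ κ * ‖D * B * M‖ ^ 2 := by rw [mul_pow]; gcongr; linarith
  have htr := two_mul_trace_le B (ε := 1 / (2 * κ)) (by positivity)
  rw [div_div_eq_mul_div, div_one] at htr
  calc 1 / (2 * κ) * ‖toEuclideanCLM (𝕜 := ℝ) B‖ ^ 2 - 2 * κ * Fintype.card n
      ≤ 1 / (2 * κ) * ‖B‖ ^ 2 - 2 * κ * Fintype.card n := by
        gcongr; exact norm_toEuclideanCLM_le_frobenius_norm B
    _ = ‖B‖ ^ 2 / κ - (1 / (2 * κ) * ‖B‖ ^ 2 + Fintype.card n * (2 * κ)) := by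
        field_simp; ring
    _ ≤ ‖D * B * M‖ ^ 2 - 2 * B.trace := by
        gcongr; rwa [div_le_iff₀ hκ, mul_comm]
    _ ≤ ‖D * B * M‖ ^ 2 - 2 * Real.log B.det := by
        linarith [hB.log_det_le_trace_sub_card, (Fintype.card n).cast_nonneg (α := ℝ)]

end Frobenius

end Matrix

open Matrix

theorem coercive_CO_general {p : ℕ} (D M : Matrix (Fin p) (Fin p) ℝ)
    (hD : D.PosDef) (hM : M.PosDef) (C : ℝ) :
    ∀ c : ℝ, ∃ R : ℝ, ∀ B : Matrix (Fin p) (Fin p) ℝ,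
      B.IsSymm → B.PosDef →
      (∑ i : Fin p, ∑ j : Fin p, if i ≠ j then |B i j| else 0) ≤ C →
      R ≤ ‖Matrix.toEuclideanCLM (𝕜 := ℝ) B‖ →
      c ≤ (∑ i : Fin p, ∑ j : Fin p, ((D * B * M) i j) ^ 2)
            - 2 * Real.log B.det := by
  intro c
  obtain ⟨a, ha, b, hbound⟩ :=
    exists_mul_opNorm_sq_sub_le_frobenius_sq_sub_log_det hD.isUnit hM.isUnit
  refine ⟨√((c + b) / a), fun B _ hB _ hR => ?_⟩
  have hnorm := (div_le_iff₀' ha).mp (Real.sqrt_le_iff.mp hR).2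
  rw [← frobenius_norm_sq_eq_sum_sq]
  linarith [hbound B hB]

/-- Coercivity of `CO(B) = ‖D B M‖_F² − 2 log det B` over the set of
symmetric positive definite matrices whose off-diagonal entries have ℓ₁ norm at most
`C`: for every level `c` there is a radius `R` such that every such `B` with operator
norm `‖B‖₂ ≥ R` has `CO(B) ≥ c`. -/
theorem coercive_CO {p : ℕ} (D M : Matrix (Fin p) (Fin p) ℝ)
    (hD : D.PosDef) (hM : M.PosDef) (C : ℝ) (hC : 0 < C) :
    ∀ c : ℝ, ∃ R : ℝ, ∀ B : Matrix (Fin p) (Fin p) ℝ,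
      B.IsSymm → B.PosDef →
      (∑ i : Fin p, ∑ j : Fin p, if i ≠ j then |B i j| else 0) ≤ C →
      R ≤ ‖Matrix.toEuclideanCLM (𝕜 := ℝ) B‖ →
      c ≤ (∑ i : Fin p, ∑ j : Fin p, ((D * B * M) i j) ^ 2)
            - 2 * Real.log B.det :=
  coercive_CO_general D M hD hM C
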